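/- arXiv:2602.09488 — 4 statements merged into one kernel-verified Lean document; each statement's English description precedes it below -/
import Mathlib

section
/- For positive integers m and k with 1 ≤ k ≤ m, the following identity holds: k! · m^(m-k) · C(m-1, k-1) = Σ over tuples (a_1, ..., a_k) of positive integers with a_1 + ... + a_k = m of (Π_{i=1}^k a_i^(a_i - 1)) · m! / (Π_{i=1}^k a_i!). -/
/-!
Write `a = b + 1` and `e n x = x (x + n)^(n-1) / n!` (with `e 0 = 1`), so that the summand is
`m! * ∏ i, e (b i) 1`. The `e n` are of binomial type, `e n (x + y) = ∑_{i+j=n} e i x * e j y`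
(Abel's identity), which follows by induction from `(e (n+1))' = e n (x + 1)` and
`e n 0 = δ n 0`. Iterating it, the sum over `k`-tuples `b` with `∑ b = m - k` is
`e (m - k) k = k m^(m-k-1) / (m-k)!`, and `m!` times this is the left-hand side.
-/

open Polynomial Finset
open scoped Nat

namespace Finset.Nat

lemma sum_antidiagonalTuple_succ {M : Type*} [AddCommMonoid M] (k n : ℕ)
    (f : (Fin (k + 1) → ℕ) → M) :
    ∑ x ∈ antidiagonalTuple (k + 1) n, f x =
      ∑ p ∈ antidiagonal n, ∑ y ∈ antidiagonalTuple k p.2, f (Fin.cons p.1 y) := by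
  rw [sum_sigma']
  refine sum_nbij' (fun x => ⟨(x 0, n - x 0), Fin.tail x⟩) (fun z => Fin.cons z.1.1 z.2)
    ?_ ?_ ?_ ?_ ?_
  · intro x hx
    simp only [mem_sigma, HasAntidiagonal.mem_antidiagonal, mem_antidiagonalTuple] at hx ⊢
    rw [Fin.sum_univ_succ] at hx
    exact ⟨by omega, by simp only [Fin.tail]; omega⟩
  · rintro ⟨⟨a, b⟩, y⟩ hz
    simp only [mem_sigma, HasAntidiagonal.mem_antidiagonal, mem_antidiagonalTuple] at hz ⊢
    rw [Fin.sum_cons, hz.2, hz.1]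
  · intro x _
    exact Fin.cons_self_tail x
  · rintro ⟨⟨a, b⟩, y⟩ hz
    simp only [mem_sigma, HasAntidiagonal.mem_antidiagonal, mem_antidiagonalTuple] at hz
    simp [← hz.1]
  · intro x _
    simp

lemma sum_antidiagonalTuple_prod_eq {R S : Type*} [AddCommMonoid R] [CommSemiring S]
    (e : ℕ → R → S) (h0 : ∀ n, e n 0 = if n = 0 then 1 else 0)
    (hadd : ∀ n x y, e n (x + y) = ∑ p ∈ antidiagonal n, e p.1 x * e p.2 y)
    (k n : ℕ) (x : Fin k → R) :
    ∑ b ∈ antidiagonalTuple k n, ∏ i, e (b i) (x i) = e n (∑ i, x i) := by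
  induction k generalizing n with
  | zero => cases n <;> simp [h0]
  | succ k ih =>
    rw [sum_antidiagonalTuple_succ, Fin.sum_univ_succ, hadd]
    refine sum_congr rfl fun p _ => ?_
    simp only [Fin.prod_univ_succ, Fin.cons_zero, Fin.cons_succ, ← mul_sum]
    rw [ih]

lemma sum_filter_pos_antidiagonalTuple {M : Type*} [AddCommMonoid M] (k n : ℕ)
    (f : (Fin k → ℕ) → M) :
    ∑ a ∈ (antidiagonalTuple k (n + k)).filter (fun a => ∀ i, 0 < a i), f a =
      ∑ b ∈ antidiagonalTuple k n, f (b + 1) := by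
  refine (sum_nbij' (· + 1) (· - 1) ?_ ?_ ?_ ?_ ?_).symm
  · intro b hb
    simp only [mem_filter, mem_antidiagonalTuple] at hb ⊢
    simp [sum_add_distrib, hb]
  · intro a ha
    simp only [mem_filter, mem_antidiagonalTuple] at ha ⊢
    have h := ha.1
    rw [← sum_congr rfl fun i _ => Nat.sub_add_cancel (ha.2 i), sum_add_distrib] at h
    simpa using h
  · intro b _
    simp
  · intro a ha
    simp only [mem_filter] at ha
    exact funext fun i => Nat.sub_add_cancel (ha.2 i)
  · intro b _
    rfl

end Finset.Nat

lemma Polynomial.eq_of_derivative_eq_of_eval_zero_eq {R : Type*} [Ring R] [IsAddTorsionFree R]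
    {p q : R[X]} (hd : derivative p = derivative q) (h0 : p.eval 0 = q.eval 0) : p = q := by
  have hC := eq_C_of_derivative_eq_zero (p := p - q) (by rw [derivative_sub, hd, sub_self])
  rw [coeff_zero_eq_eval_zero, eval_sub, h0, sub_self, C_0, sub_eq_zero] at hC
  exact hC

/-- The Abel polynomial `X (X + n)^(n-1)` divided by `n!`. -/
noncomputable def dividedAbel : ℕ → ℚ[X]
  | 0 => 1
  | n + 1 => C ((n + 1)! : ℚ)⁻¹ * X * (X + C ((n : ℚ) + 1)) ^ n

lemma dividedAbel_eval_zero (n : ℕ) : (dividedAbel n).eval 0 = if n = 0 then 1 else 0 := by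
  cases n <;> simp [dividedAbel]

lemma dividedAbel_eval_mul (n : ℕ) (x : ℚ) :
    (dividedAbel n).eval x * (x + n) * n ! = x * (x + n) ^ n := by
  cases n with
  | zero => simp [dividedAbel]
  | succ n =>
    simp only [dividedAbel, eval_mul, eval_C, eval_X, eval_pow, eval_add]
    have : ((n + 1)! : ℚ) ≠ 0 := by positivity
    push_cast
    field_simp
    ring

lemma dividedAbel_eval_one (n : ℕ) :
    (dividedAbel n).eval 1 = ((n + 1 : ℕ) : ℚ) ^ n / (n + 1)! := by
  have h := dividedAbel_eval_mul n 1
  rw [Nat.factorial_succ]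
  have : (n ! : ℚ) ≠ 0 := by positivity
  push_cast
  field_simp
  linear_combination h

lemma cast_factorial_mul_pow_mul_choose (n k : ℕ) (hk : 1 ≤ k) :
    ((k ! * (n + k) ^ n * (n + k - 1).choose (k - 1) : ℕ) : ℚ) =
      (n + k)! * (dividedAbel n).eval (k : ℚ) := by
  obtain ⟨j, rfl⟩ := Nat.exists_eq_add_of_le' hk
  have habel := dividedAbel_eval_mul n (j + 1 : ℕ)
  have hchoose : ((n + j).choose j * n ! * j ! : ℚ) = (n + j)! := by
    exact_mod_cast Nat.add_choose_mul_factorial_mul_factorial n j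
  rw [show n + (j + 1) - 1 = n + j by omega, Nat.add_sub_cancel, ← add_assoc,
    Nat.factorial_succ, Nat.factorial_succ (n + j)]
  push_cast at habel ⊢
  rw [← hchoose]
  linear_combination -((n + j).choose j * j ! : ℚ) * habel

lemma derivative_dividedAbel_succ (n : ℕ) :
    derivative (dividedAbel (n + 1)) = (dividedAbel n).comp (X + 1) := by
  cases n with
  | zero => simp [dividedAbel]
  | succ n =>
    have hc : C ((n + 1 + 1)! : ℚ)⁻¹ * (n + 1 + 1 : ℚ[X]) = C ((n + 1)! : ℚ)⁻¹ := by
      rw [Nat.factorial_succ (n + 1)]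
      have : ((n + 1)! : ℚ) ≠ 0 := by positivity
      rw [← C_eq_natCast, ← C_1, ← C_add, ← C_add, ← C_mul]
      congr 1
      push_cast
      field_simp
    simp only [dividedAbel, derivative_mul, derivative_C, derivative_X, derivative_pow,
      mul_comp, C_comp, X_comp, pow_comp, add_comp, map_add, map_one, map_natCast,
      derivative_natCast, derivative_one, natCast_comp, one_comp]
    push_cast
    linear_combination (X + 1) * (X + (n + 1 + 1 : ℚ[X])) ^ n * hc

lemma dividedAbel_comp_X_add_C (n : ℕ) (y : ℚ) :
    (dividedAbel n).comp (X + C y) =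
      ∑ p ∈ antidiagonal n, C ((dividedAbel p.1).eval y) * dividedAbel p.2 := by
  induction n with
  | zero => simp [dividedAbel]
  | succ n ih =>
    apply eq_of_derivative_eq_of_eval_zero_eq
    · rw [derivative_comp, derivative_dividedAbel_succ, derivative_sum,
        Nat.sum_antidiagonal_succ']
      simp only [derivative_C_mul, derivative_dividedAbel_succ]
      rw [dividedAbel, derivative_one, mul_zero, zero_add]
      have hsum :
          ∑ p ∈ antidiagonal n, C ((dividedAbel p.1).eval y) * (dividedAbel p.2).comp (X + 1) =
            (∑ p ∈ antidiagonal n,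
              C ((dividedAbel p.1).eval y) * dividedAbel p.2).comp (X + 1) := by
        simp only [Polynomial.sum_comp, mul_comp, C_comp]
      rw [hsum, ← ih, comp_assoc, comp_assoc]
      simp only [derivative_add, derivative_X, derivative_C, add_zero, one_mul, add_comp,
        X_comp, C_comp, one_comp, add_right_comm]
    · rw [eval_finsetSum, Nat.sum_antidiagonal_succ']
      simp [eval_comp, dividedAbel_eval_zero]

lemma dividedAbel_eval_add (n : ℕ) (x y : ℚ) :
    (dividedAbel n).eval (x + y) =
      ∑ p ∈ antidiagonal n, (dividedAbel p.1).eval x * (dividedAbel p.2).eval y := by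
  simpa [eval_comp, eval_finsetSum, add_comm] using
    congrArg (eval y) (dividedAbel_comp_X_add_C n x)

lemma cast_prod_pow_mul_factorial_div {ι : Type*} [Fintype ι] (a : ι → ℕ) {m : ℕ}
    (ha : ∑ i, a i = m) :
    (((∏ i, a i ^ (a i - 1)) * (m ! / ∏ i, (a i)!) : ℕ) : ℚ) =
      m ! * ∏ i, ((a i : ℚ) ^ (a i - 1) / (a i)!) := by
  have hdvd : ∏ i, (a i)! ∣ m ! := ha ▸ Nat.prod_factorial_dvd_factorial_sum _ _
  rw [Nat.cast_mul, Nat.cast_div hdvd (by positivity), prod_div_distrib]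
  push_cast
  ring

theorem moreda_equality_general (m k : ℕ) (hk : 1 ≤ k) (hkm : k ≤ m) :
    Nat.factorial k * m ^ (m - k) * Nat.choose (m - 1) (k - 1) =
      ∑ a ∈ (Finset.Nat.antidiagonalTuple k m).filter (fun a => ∀ i, 0 < a i),
        (∏ i, a i ^ (a i - 1)) * (Nat.factorial m / ∏ i, Nat.factorial (a i)) := by
  obtain ⟨n, rfl⟩ := Nat.exists_eq_add_of_le' hkm
  have hsum : ∑ b ∈ Nat.antidiagonalTuple k n, ∏ i, (dividedAbel (b i)).eval 1 =
      (dividedAbel n).eval (k : ℚ) := by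
    simpa using Nat.sum_antidiagonalTuple_prod_eq (fun n x => (dividedAbel n).eval x)
      dividedAbel_eval_zero dividedAbel_eval_add k n (fun _ => 1)
  rw [Nat.sum_filter_pos_antidiagonalTuple, Nat.add_sub_cancel]
  refine Nat.cast_injective (R := ℚ) ?_
  rw [Nat.cast_sum, cast_factorial_mul_pow_mul_choose n k hk, ← hsum, mul_sum]
  refine sum_congr rfl fun b hb => ?_
  rw [cast_prod_pow_mul_factorial_div]
  · simp [dividedAbel_eval_one]
  · simp [sum_add_distrib, Nat.mem_antidiagonalTuple.mp hb]

/-- The Moreda equality: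
`k! · m^(m-k) · C(m-1, k-1) = Σ_{a_1+⋯+a_k=m, a_i ≥ 1} (∏ a_i^(a_i-1)) · m!/∏ a_i!`. -/
theorem moreda_equality (m k : ℕ) (hm : 0 < m) (hk : 1 ≤ k) (hkm : k ≤ m) :
    Nat.factorial k * m ^ (m - k) * Nat.choose (m - 1) (k - 1) =
      ∑ a ∈ (Finset.Nat.antidiagonalTuple k m).filter (fun a => ∀ i, 0 < a i),
        (∏ i, a i ^ (a i - 1)) * (Nat.factorial m / ∏ i, Nat.factorial (a i)) :=
  moreda_equality_general m k hk hkm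
end

section
/- For n ≥ 2, the number of labeled trees on {1,...,n} in which vertex 1 has degree k equals C(n-2, k-1) · (n-1)^(n-1-k), for each 1 ≤ k ≤ n-1. -/
/-!
Let `t k` be the number of trees on a finite vertex set `V` (`N + 1` vertices) in which a fixed
root `r` has degree `k`. Given a tree of root degree `k` and a vertex `y ≠ r` not adjacent to `r`,
cutting the edge from `y` towards `r` and joining `y` to `r` instead gives a tree of root degree
`k + 1`: there are `N - k` such moves. Conversely, in a tree of root degree `k + 1`, choosing a
vertex `x ≠ r` and a neighbour `y` of `r` not on the path from `r` to `x`, and moving the edge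
`ry` to `xy`, gives a tree of root degree `k`: there are `N * k` such moves. The moves are mutually inverse, so
`t k * (N - k) = t (k + 1) * (N * k)`. Together with `t N = 1` (only the star has `r` adjacent to
everything), this recurrence forces `t k = C(N - 1, k - 1) * N ^ (N - k)`.
-/

lemma Nat.card_sigma_of_forall_card_eq {ι : Type*} [Finite ι] {F : ι → Type*}
    [∀ i, Finite (F i)] {c : ℕ} (h : ∀ i, Nat.card (F i) = c) :
    Nat.card (Σ i, F i) = Nat.card ι * c := by
  have := Fintype.ofFinite ι
  simp [Nat.card_sigma, h]

lemma eq_choose_mul_pow_of_mul_sub_eq {t : ℕ → ℕ} {N : ℕ} (hN : t N = 1)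
    (ht : ∀ k, t k * (N - k) = t (k + 1) * (N * k)) {k : ℕ} (hk : 1 ≤ k) (hkN : k ≤ N) :
    t k = (N - 1).choose (k - 1) * N ^ (N - k) := by
  induction hkN using Nat.decreasingInduction with
  | self => simp [hN]
  | of_succ k hkN ih =>
    obtain ⟨j, rfl⟩ : ∃ j, k = j + 1 := ⟨k - 1, by omega⟩
    have hchoose := Nat.choose_succ_right_eq (N - 1) j
    rw [show N - 1 - j = N - (j + 1) by omega] at hchoose
    have hpow : N ^ (N - (j + 1)) = N ^ (N - (j + 1 + 1)) * N := by
      rw [← pow_succ]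
      congr 1
      omega
    refine Nat.eq_of_mul_eq_mul_right (Nat.sub_pos_of_lt hkN) ?_
    rw [ht, ih (by omega), hpow, Nat.add_sub_cancel, Nat.add_sub_cancel]
    calc (N - 1).choose (j + 1) * N ^ (N - (j + 1 + 1)) * (N * (j + 1))
        = (N - 1).choose (j + 1) * (j + 1) * (N ^ (N - (j + 1 + 1)) * N) := by ring
      _ = (N - 1).choose j * (N ^ (N - (j + 1 + 1)) * N) * (N - (j + 1)) := by
        rw [hchoose]
        ring

namespace SimpleGraph

variable {V : Type*} {G T : SimpleGraph V} {a b c d r v x y : V}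

lemma Reachable.deleteEdges_or (h : G.Reachable v a) :
    (G.deleteEdges {s(a, b)}).Reachable v a ∨ (G.deleteEdges {s(a, b)}).Reachable v b := by
  obtain ⟨p⟩ := h
  induction p with
  | nil => exact .inl .rfl
  | @cons u w a huw _ ih =>
    by_cases he : s(u, w) = s(a, b)
    · rcases Sym2.eq_iff.1 he with ⟨rfl, -⟩ | ⟨rfl, -⟩
      · exact .inl .rfl
      · exact .inr .rfl
    · have : (G.deleteEdges {s(a, b)}).Adj u w := by simp [huw, he]
      exact ih.imp this.reachable.trans this.reachable.trans

lemma deleteEdges_sup_edge_deleteEdges (h : ¬G.Adj c d) :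
    (G ⊔ edge c d).deleteEdges {s(c, d)} = G := by
  simp [deleteEdges_sup, h]

lemma deleteEdges_sup_edge_of_adj (h : G.Adj a b) : G.deleteEdges {s(a, b)} ⊔ edge a b = G := by
  ext u w
  grind [deleteEdges_adj, Adj.symm, Adj.ne]

lemma IsTree.not_reachable_deleteEdges (hT : T.IsTree) (h : T.Adj a b) :
    ¬(T.deleteEdges {s(a, b)}).Reachable a b :=
  isAcyclic_iff_forall_adj_isBridge.mp hT.isAcyclic h

lemma IsTree.deleteEdges_sup_edge (hT : T.IsTree) (hab : T.Adj a b)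
    (hc : (T.deleteEdges {s(a, b)}).Reachable c a)
    (hd : (T.deleteEdges {s(a, b)}).Reachable d b) :
    (T.deleteEdges {s(a, b)} ⊔ edge c d).IsTree := by
  set H := T.deleteEdges {s(a, b)}
  have hcd : ¬H.Reachable c d := fun h ↦
    hT.not_reachable_deleteEdges hab (hc.symm.trans (h.trans hd))
  have hdc : (H ⊔ edge c d).Adj d c := by
    have : d ≠ c := by
      rintro rfl
      exact hcd .rfl
    simp [edge_adj, this]
  have reachable_a : ∀ u, (H ⊔ edge c d).Reachable u a := fun u ↦
    ((hT.connected u a).deleteEdges_or (b := b)).elim (·.mono le_sup_left) fun h ↦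
      (h.trans hd.symm).mono le_sup_left |>.trans (hdc.reachable.trans (hc.mono le_sup_left))
  have := hT.connected.nonempty
  exact ⟨⟨fun u w ↦ (reachable_a u).trans (reachable_a w).symm⟩,
    (hT.isAcyclic.anti (deleteEdges_le _)).sup_edge_of_not_reachable hcd⟩

lemma IsTree.existsUnique_adj_not_reachable_deleteEdges (hT : T.IsTree) (hv : v ≠ r) :
    ∃! u, T.Adj u v ∧ ¬(T.deleteEdges {s(u, v)}).Reachable r v := by
  obtain ⟨p, hp⟩ := hT.connected.exists_isPath v r
  cases p with
  | nil => exact absurd rfl hv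
  | @cons _ u _ hvu q =>
    rw [Walk.cons_isPath_iff] at hp
    have hq : (T.deleteEdges {s(u, v)}).Reachable u r :=
      ⟨q.toDeleteEdges _ fun e he ↦ by
        rintro rfl
        exact hp.2 (q.snd_mem_support_of_mem_edges he)⟩
    refine ⟨u, ⟨hvu.symm, fun h ↦ hT.not_reachable_deleteEdges hvu.symm (hq.trans h)⟩,
      fun w ⟨hwv, hw⟩ ↦ ?_⟩
    have := (Walk.cons hvu q).mem_edges_of_not_reachable_deleteEdges (fun h ↦ hw h.symm)
    rw [Walk.edges_cons, List.mem_cons] at this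
    rcases this with h | h
    · grind
    · exact absurd (q.snd_mem_support_of_mem_edges h) hp.2

lemma IsTree.eq_starGraph (hT : T.IsTree) (h : T.IsUniversal r) : T = starGraph r := by
  refine ((isTree_iff_minimal_connected.1 hT).eq_of_le (isTree_starGraph r).connected ?_).symm
  rintro u w ⟨huw, rfl | rfl⟩
  · exact h huw
  · exact (h huw.symm).symm

/- The two moves of the double counting: `CanLiftToRoot r T x y` allows replacing the edge `xy`
by `ry`, and `CanDropFromRoot r T x y` allows replacing `ry` by `xy`. -/

def CanLiftToRoot (r : V) (T : SimpleGraph V) (x y : V) : Prop :=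
  T.Adj x y ∧ x ≠ r ∧ ¬(T.deleteEdges {s(x, y)}).Reachable r y

def CanDropFromRoot (r : V) (T : SimpleGraph V) (x y : V) : Prop :=
  T.Adj r y ∧ x ≠ r ∧ (T.deleteEdges {s(r, y)}).Reachable r x

namespace CanLiftToRoot

lemma ne_root (h : CanLiftToRoot r T x y) : y ≠ r := by
  rintro rfl
  exact h.2.2 .rfl

lemma not_adj_root (h : CanLiftToRoot r T x y) : ¬T.Adj r y := fun hry ↦
  h.2.2 (Adj.reachable (by simp [hry, h.2.1.symm, h.ne_root.symm]))

lemma deleteEdges_lift (h : CanLiftToRoot r T x y) :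
    (T.deleteEdges {s(x, y)} ⊔ edge r y).deleteEdges {s(r, y)} = T.deleteEdges {s(x, y)} :=
  deleteEdges_sup_edge_deleteEdges fun hry ↦ h.2.2 hry.reachable

lemma reachable_deleteEdges (h : CanLiftToRoot r T x y) (hT : T.IsTree) :
    (T.deleteEdges {s(x, y)}).Reachable r x :=
  (hT.connected r x).deleteEdges_or.resolve_right h.2.2

lemma isTree_lift (h : CanLiftToRoot r T x y) (hT : T.IsTree) :
    (T.deleteEdges {s(x, y)} ⊔ edge r y).IsTree :=
  hT.deleteEdges_sup_edge h.1 (h.reachable_deleteEdges hT) .rfl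

lemma canDropFromRoot_lift (h : CanLiftToRoot r T x y) (hT : T.IsTree) :
    CanDropFromRoot r (T.deleteEdges {s(x, y)} ⊔ edge r y) x y := by
  refine ⟨by simp [edge_adj, h.ne_root.symm], h.2.1, ?_⟩
  rw [h.deleteEdges_lift]
  exact h.reachable_deleteEdges hT

lemma card_neighborSet_lift [Finite V] (h : CanLiftToRoot r T x y) :
    Nat.card ((T.deleteEdges {s(x, y)} ⊔ edge r y).neighborSet r) =
      Nat.card (T.neighborSet r) + 1 := by
  have hyr := h.ne_root
  have hxr := h.2.1
  have : (T.deleteEdges {s(x, y)} ⊔ edge r y).neighborSet r = insert y (T.neighborSet r) := by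
    ext w
    grind [mem_neighborSet, deleteEdges_adj, Adj.ne]
  rw [this, Nat.card_coe_set_eq, Set.ncard_insert_of_notMem (s := T.neighborSet r) h.not_adj_root,
    Nat.card_coe_set_eq]

end CanLiftToRoot

namespace CanDropFromRoot

lemma deleteEdges_drop (h : CanDropFromRoot r T x y) (hT : T.IsTree) :
    (T.deleteEdges {s(r, y)} ⊔ edge x y).deleteEdges {s(x, y)} = T.deleteEdges {s(r, y)} :=
  deleteEdges_sup_edge_deleteEdges fun hxy ↦
    hT.not_reachable_deleteEdges h.1 (h.2.2.trans hxy.reachable)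

lemma isTree_drop (h : CanDropFromRoot r T x y) (hT : T.IsTree) :
    (T.deleteEdges {s(r, y)} ⊔ edge x y).IsTree :=
  hT.deleteEdges_sup_edge h.1 h.2.2.symm .rfl

lemma canLiftToRoot_drop (h : CanDropFromRoot r T x y) (hT : T.IsTree) :
    CanLiftToRoot r (T.deleteEdges {s(r, y)} ⊔ edge x y) x y := by
  have hxy : x ≠ y := by
    rintro rfl
    exact hT.not_reachable_deleteEdges h.1 h.2.2
  refine ⟨by simp [edge_adj, hxy], h.2.1, ?_⟩
  rw [h.deleteEdges_drop hT]
  exact hT.not_reachable_deleteEdges h.1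

lemma card_neighborSet_drop [Finite V] (h : CanDropFromRoot r T x y) :
    Nat.card ((T.deleteEdges {s(r, y)} ⊔ edge x y).neighborSet r) + 1 =
      Nat.card (T.neighborSet r) := by
  have : (T.deleteEdges {s(r, y)} ⊔ edge x y).neighborSet r = T.neighborSet r \ {y} := by
    ext w
    simp [edge_adj, h.2.1.symm, h.1.ne]
  rw [this, Nat.card_coe_set_eq, Set.ncard_sdiff_singleton_add_one (s := T.neighborSet r) h.1,
    Nat.card_coe_set_eq]

end CanDropFromRoot

abbrev TreeWithRootDegree (r : V) (k : ℕ) : Type _ :=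
  {T : SimpleGraph V // T.IsTree ∧ Nat.card (T.neighborSet r) = k}

variable [Finite V]

def liftToRootEquiv (r : V) (k : ℕ) :
    (Σ T : TreeWithRootDegree r k, {q : V × V // CanLiftToRoot r T q.1 q.2}) ≃
      Σ T : TreeWithRootDegree r (k + 1), {q : V × V // CanDropFromRoot r T q.1 q.2} where
  toFun := fun ⟨T, q, h⟩ ↦ ⟨⟨_, h.isTree_lift T.2.1, by rw [h.card_neighborSet_lift, T.2.2]⟩,
    q, h.canDropFromRoot_lift T.2.1⟩
  invFun := fun ⟨T, q, h⟩ ↦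
    ⟨⟨_, h.isTree_drop T.2.1, Nat.add_right_cancel (h.card_neighborSet_drop.trans T.2.2)⟩,
      q, h.canLiftToRoot_drop T.2.1⟩
  left_inv := fun ⟨T, q, h⟩ ↦ Sigma.subtype_ext
    (Subtype.ext (by simp only [h.deleteEdges_lift, deleteEdges_sup_edge_of_adj h.1])) rfl
  right_inv := fun ⟨T, q, h⟩ ↦ Sigma.subtype_ext
    (Subtype.ext (by simp only [h.deleteEdges_drop T.2.1, deleteEdges_sup_edge_of_adj h.1])) rfl

lemma card_canLiftToRoot (hT : T.IsTree) :
    Nat.card {q : V × V // CanLiftToRoot r T q.1 q.2} + Nat.card (T.neighborSet r) + 1 =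
      Nat.card V := by
  have hbij : Nat.card {q : V × V // CanLiftToRoot r T q.1 q.2} =
      Nat.card ↥(insert r (T.neighborSet r))ᶜ := by
    refine Nat.card_eq_of_bijective (fun q ↦ ⟨q.1.2, by simp [q.2.ne_root, q.2.not_adj_root]⟩)
      ⟨?_, ?_⟩
    · rintro ⟨⟨x, y⟩, h⟩ ⟨⟨x', y'⟩, h'⟩ hyy'
      obtain rfl : y = y' := congrArg Subtype.val hyy'
      obtain rfl : x = x' := (hT.existsUnique_adj_not_reachable_deleteEdges h.ne_root).unique
        ⟨h.1, h.2.2⟩ ⟨h'.1, h'.2.2⟩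
      rfl
    · rintro ⟨y, hy⟩
      simp only [Set.mem_compl_iff, Set.mem_insert_iff, mem_neighborSet, not_or] at hy
      obtain ⟨x, ⟨hxy, hsep⟩, -⟩ := hT.existsUnique_adj_not_reachable_deleteEdges hy.1
      exact ⟨⟨(x, y), hxy, by rintro rfl; exact hy.2 hxy, hsep⟩, rfl⟩
  rw [hbij, Nat.card_coe_set_eq, Nat.card_coe_set_eq, add_assoc,
    ← Set.ncard_insert_of_notMem (by simp : r ∉ T.neighborSet r), Set.ncard_compl_add_ncard]

lemma card_adj_reachable_deleteEdges_add_one (hT : T.IsTree) (hx : x ≠ r) :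
    Nat.card {y // T.Adj r y ∧ (T.deleteEdges {s(r, y)}).Reachable r x} + 1 =
      Nat.card (T.neighborSet r) := by
  obtain ⟨p, ⟨hpr, hp⟩, hunique⟩ := hT.existsUnique_adj_not_reachable_deleteEdges hx.symm
  have : {y | T.Adj r y ∧ (T.deleteEdges {s(r, y)}).Reachable r x} = T.neighborSet r \ {p} := by
    ext y
    simp only [Set.mem_ofPred_eq, Set.mem_sdiff, mem_neighborSet, Set.mem_singleton_iff]
    refine and_congr_right fun hy ↦ ⟨?_, fun hyp ↦ by_contra fun h ↦ hyp (hunique y ⟨hy.symm, ?_⟩)⟩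
    · rintro h rfl
      exact hp (by rw [Sym2.eq_swap]; exact h.symm)
    · rwa [Sym2.eq_swap, reachable_comm]
  change Nat.card ↥{y | T.Adj r y ∧ (T.deleteEdges {s(r, y)}).Reachable r x} + 1 = _
  rw [this, Nat.card_coe_set_eq, Set.ncard_sdiff_singleton_add_one (s := T.neighborSet r) hpr.symm,
    Nat.card_coe_set_eq]

lemma card_canDropFromRoot (hT : T.IsTree) {k : ℕ} (hk : Nat.card (T.neighborSet r) = k + 1) :
    Nat.card {q : V × V // CanDropFromRoot r T q.1 q.2} = (Nat.card V - 1) * k := by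
  let e : {q : V × V // CanDropFromRoot r T q.1 q.2} ≃
      Σ x : {x // x ≠ r}, {y // T.Adj r y ∧ (T.deleteEdges {s(r, y)}).Reachable r x} :=
    { toFun := fun q ↦ ⟨⟨q.1.1, q.2.2.1⟩, q.1.2, q.2.1, q.2.2.2⟩
      invFun := fun p ↦ ⟨(p.1, p.2), p.2.2.1, p.1.2, p.2.2.2⟩
      left_inv := fun _ ↦ rfl
      right_inv := fun _ ↦ rfl }
  have hcompl : Nat.card {x // x ≠ r} = Nat.card V - 1 :=
    (Set.ncard_compl {r}).trans (by rw [Set.ncard_singleton])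
  rw [Nat.card_congr e, Nat.card_sigma_of_forall_card_eq fun x ↦ ?_, hcompl]
  have := card_adj_reachable_deleteEdges_add_one hT x.2
  omega

lemma isUniversal_iff_card_neighborSet :
    G.IsUniversal r ↔ Nat.card (G.neighborSet r) = Nat.card V - 1 := by
  rw [← neighborSet_eq_compl_singleton, Nat.card_coe_set_eq]
  refine ⟨fun h ↦ by rw [h, Set.ncard_compl, Set.ncard_singleton], fun h ↦ ?_⟩
  refine Set.eq_of_subset_of_ncard_le (fun w hw ↦ (G.ne_of_adj hw).symm) ?_
  rw [Set.ncard_compl, Set.ncard_singleton, h]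

lemma card_treeWithRootDegree_card_sub_one (r : V) :
    Nat.card (TreeWithRootDegree r (Nat.card V - 1)) = 1 := by
  refine Nat.card_eq_one_iff_exists.2 ⟨⟨starGraph r, isTree_starGraph r,
    isUniversal_iff_card_neighborSet.1 isUniversal_starGraph_self⟩, fun ⟨T, hT, hk⟩ ↦ ?_⟩
  exact Subtype.ext (hT.eq_starGraph (isUniversal_iff_card_neighborSet.2 hk))

lemma card_treeWithRootDegree_mul (r : V) (k : ℕ) :
    Nat.card (TreeWithRootDegree r k) * (Nat.card V - 1 - k) =
      Nat.card (TreeWithRootDegree r (k + 1)) * ((Nat.card V - 1) * k) := by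
  rw [← Nat.card_sigma_of_forall_card_eq
      (F := fun T : TreeWithRootDegree r k ↦ {q : V × V // CanLiftToRoot r T q.1 q.2}) fun T ↦ ?_,
    ← Nat.card_sigma_of_forall_card_eq fun T : TreeWithRootDegree r (k + 1) ↦
      card_canDropFromRoot T.2.1 T.2.2]
  · exact Nat.card_congr (liftToRootEquiv r k)
  · have := card_canLiftToRoot (r := r) T.2.1
    omega

end SimpleGraph

/-- Degree-conditioned Cayley formula: the number of labeled trees on `{1,…,n}` in which
vertex 1 has degree `k` is `C(n-2, k-1) · (n-1)^(n-1-k)`. -/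
theorem count_trees_degree_of_vertex_one (n k : ℕ) (hn : 2 ≤ n) (hk : 1 ≤ k)
    (hkn : k ≤ n - 1) :
    Nat.card {G : SimpleGraph (Fin n) //
        G.IsTree ∧ Nat.card {w // G.Adj ⟨0, by omega⟩ w} = k} =
      Nat.choose (n - 2) (k - 1) * (n - 1) ^ (n - 1 - k) := by
  have hbase := SimpleGraph.card_treeWithRootDegree_card_sub_one (⟨0, by omega⟩ : Fin n)
  have hrec := SimpleGraph.card_treeWithRootDegree_mul (⟨0, by omega⟩ : Fin n)
  rw [Nat.card_fin] at hbase hrec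
  exact eq_choose_mul_pow_of_mul_sub_eq hbase hrec hk hkn
end

section
/- For integers k ≥ 2 and positive integers a_1,...,a_k, Σ over positive integer tuples (d_1,...,d_k) with Σ d_i = 2k-2 of ((k-2)!/Π_{i=1}^k (d_i - 1)!) · Π_{i=1}^k a_i^{d_i} = (a_1 + ... + a_k)^{k-2} · Π_{i=1}^k a_i. -/
/-- `Σ_{d_1+⋯+d_k = 2k-2, d_i ≥ 1} ((k-2)!/∏ (d_i-1)!) · ∏ a_i^(d_i)
  = (a_1+⋯+a_k)^(k-2) · ∏ a_i`. -/
theorem super_vertex_identity (k : ℕ) (hk : 2 ≤ k) (a : Fin k → ℕ) (hpos : ∀ i, 0 < a i) :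
    ∑ d ∈ (Finset.Nat.antidiagonalTuple k (2 * k - 2)).filter (fun d => ∀ i, 0 < d i),
        (Nat.factorial (k - 2) / ∏ i, Nat.factorial (d i - 1)) * ∏ i, a i ^ (d i) =
      (∑ i, a i) ^ (k - 2) * ∏ i, a i := by
  have key : ∀ (d : Fin k → ℕ), (∀ i, 0 < d i) → ∑ i, d i = 2 * k - 2 →
      ∑ i, (d i - 1) = k - 2 := by
    intro d hp hs
    have h : ∑ i, (d i - 1 + 1) = ∑ i, d i :=
      Finset.sum_congr rfl fun i _ => Nat.sub_add_cancel (hp i)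
    rw [Finset.sum_add_distrib, Finset.sum_const, Finset.card_univ, Fintype.card_fin,
      smul_eq_mul, mul_one, hs] at h
    omega
  rw [Finset.sum_pow_eq_sum_piAntidiag, Finset.sum_mul]
  refine Finset.sum_nbij' (fun d i => d i - 1) (fun e i => e i + 1) ?_ ?_ ?_ ?_ ?_
  · intro d hd
    simp only [Finset.mem_filter, Finset.Nat.mem_antidiagonalTuple] at hd
    rw [Finset.mem_piAntidiag]
    exact ⟨key d hd.2 hd.1, by simp⟩
  · intro e he
    rw [Finset.mem_piAntidiag] at he
    simp only [Finset.mem_filter, Finset.Nat.mem_antidiagonalTuple]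
    refine ⟨?_, fun i => Nat.succ_pos _⟩
    rw [Finset.sum_add_distrib, Finset.sum_const, Finset.card_univ, Fintype.card_fin,
      smul_eq_mul, mul_one, he.1]
    omega
  · intro d hd
    simp only [Finset.mem_filter] at hd
    funext i
    exact Nat.succ_pred_eq_of_pos (hd.2 i)
  · intro e he; funext i; simp
  · intro d hd
    simp only [Finset.mem_filter, Finset.Nat.mem_antidiagonalTuple] at hd
    have hsum := key d hd.2 hd.1
    have hm : Nat.multinomial Finset.univ (fun i => d i - 1)
        = Nat.factorial (k - 2) / ∏ i, Nat.factorial (d i - 1) := by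
      rw [Nat.multinomial, hsum]
    simp only [Nat.cast_id]
    rw [hm, mul_assoc]
    congr 1
    rw [← Finset.prod_mul_distrib]
    exact Finset.prod_congr rfl fun i _ => by
      rw [← pow_succ, Nat.sub_add_cancel (hd.2 i)]
end

section
/- The number of labeled trees on {1,...,n} with a fixed degree sequence (d_1,...,d_n) equals the multinomial coefficient (n-2)! / Π(d_i - 1)!, and summing this over all positive integer sequences (d_1,...,d_n) with Σ d_i = 2n-2 gives n^(n-2). -/
/-!
Deleting a leaf `v` whose neighbour is `k` turns a tree with degree sequence `d` into a tree on the
remaining vertices whose degree sequence is `d` with `d_k` lowered by one, and this is reversed by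
attaching a new leaf to `k`. A leaf exists because `∑ dᵢ = 2n - 2 < 2n`, so the number `T(d)` of
trees satisfies `T(d) = ∑_k T(d - e_k)`, which is the Pascal recursion of the multinomial
coefficient `(n - 2)! / ∏ (dᵢ - 1)!`. Summing over `d` is the multinomial theorem for
`(1 + ⋯ + 1) ^ (n - 2)`.
-/

open Finset SimpleGraph
open scoped Nat

namespace Nat

section

variable {α : Type*} [DecidableEq α] {s : Finset α} {f : α → ℕ} {i : α}

theorem prod_factorial_mul_multinomial_update_pred (hi : i ∈ s) (hfi : f i ≠ 0) :
    (∏ j ∈ s, (f j)!) * multinomial s (Function.update f i (f i - 1)) =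
      f i * (∑ j ∈ s, f j - 1)! := by
  have hsum : ∑ j ∈ s, Function.update f i (f i - 1) j = ∑ j ∈ s, f j - 1 := by
    rw [sum_update_of_mem hi, ← add_sum_erase s f hi, sdiff_singleton_eq_erase]
    omega
  have hprod : ∏ j ∈ s, (f j)! = f i * ∏ j ∈ s, (Function.update f i (f i - 1) j)! := by
    rw [← mul_prod_erase s _ hi, ← mul_prod_erase s (fun j => (Function.update f i _ j)!) hi,
      Function.update_self, ← mul_assoc, mul_factorial_pred hfi]
    exact congrArg _ <| prod_congr rfl fun j hj => by
      rw [Function.update_of_ne (ne_of_mem_erase hj)]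
  rw [hprod, mul_assoc, multinomial_spec, hsum]

theorem multinomial_eq_sum_multinomial_update_pred (hs : ∑ j ∈ s, f j ≠ 0) :
    multinomial s f = ∑ i ∈ s with f i ≠ 0, multinomial s (Function.update f i (f i - 1)) := by
  have hP : 0 < ∏ j ∈ s, (f j)! := prod_pos fun j _ => factorial_pos _
  refine Nat.eq_of_mul_eq_mul_left hP ?_
  calc (∏ j ∈ s, (f j)!) * multinomial s f
      = (∑ j ∈ s, f j) * (∑ j ∈ s, f j - 1)! := by rw [multinomial_spec, mul_factorial_pred hs]
    _ = ∑ i ∈ s with f i ≠ 0, f i * (∑ j ∈ s, f j - 1)! := by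
      rw [sum_filter_of_ne fun _ _ h => left_ne_zero_of_mul h, sum_mul]
    _ = _ := by
      rw [mul_sum]
      exact sum_congr rfl fun i hi => by
        rw [mem_filter] at hi
        rw [prod_factorial_mul_multinomial_update_pred hi.1 hi.2]

end

theorem multinomial_univ_comp_equiv {ι κ : Type*} [Fintype ι] [Fintype κ] (e : ι ≃ κ)
    (f : κ → ℕ) : multinomial univ (f ∘ e) = multinomial univ f := by
  simp only [multinomial, Function.comp_apply, e.sum_comp, e.prod_comp (fun i => (f i)!)]

theorem multinomial_univ_of_last_eq_zero {n : ℕ} {f : Fin (n + 1) → ℕ} (h : f (Fin.last n) = 0) :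
    multinomial univ f = multinomial univ (f ∘ Fin.castSucc) := by
  simp [multinomial, Fin.sum_univ_castSucc, Fin.prod_univ_castSucc, h]

end Nat

theorem sum_tsub_one_of_pos {ι : Type*} (s : Finset ι) {d : ι → ℕ} (hd : ∀ i ∈ s, 0 < d i) :
    ∑ i ∈ s, (d i - 1) = ∑ i ∈ s, d i - #s := by
  rw [sum_tsub_distrib s hd, card_eq_sum_ones]

theorem exists_eq_one_of_sum_lt {ι : Type*} {s : Finset ι} {d : ι → ℕ} (hpos : ∀ i ∈ s, 0 < d i)
    (hsum : ∑ i ∈ s, d i < 2 * #s) : ∃ i ∈ s, d i = 1 := by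
  by_contra! h
  have : #s • 2 ≤ ∑ i ∈ s, d i :=
    card_nsmul_le_sum s d 2 fun i hi => by have := hpos i hi; have := h i hi; omega
  rw [smul_eq_mul] at this
  omega

theorem factorial_div_prod_factorial_pred_eq_multinomial {n m : ℕ} {d : Fin n → ℕ}
    (hpos : ∀ i, 0 < d i) (hsum : ∑ i, d i = m + n) :
    m ! / ∏ i, (d i - 1)! = Nat.multinomial univ (d - 1) := by
  have : ∑ i, (d - 1) i = m := by
    simp only [Pi.sub_apply, Pi.one_apply]
    rw [sum_tsub_one_of_pos univ fun i _ => hpos i, hsum, card_univ, Fintype.card_fin]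
    omega
  rw [Nat.multinomial, this]
  rfl

theorem sum_factorial_div_prod_factorial_pred (n m : ℕ) :
    ∑ d ∈ (Nat.antidiagonalTuple n (m + n)).filter (fun d => ∀ i, 0 < d i),
      m ! / ∏ i, (d i - 1)! = n ^ m := by
  have multinomial_thm := sum_pow_eq_sum_piAntidiag univ (fun _ : Fin n => 1) m
  simp only [one_pow, prod_const_one, mul_one, sum_const, card_univ, Fintype.card_fin,
    smul_eq_mul, Nat.cast_id] at multinomial_thm
  rw [multinomial_thm]
  refine sum_nbij' (· - 1) (· + 1) ?_ ?_ ?_ ?_ ?_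
  · intro d hd
    rw [mem_filter, Nat.mem_antidiagonalTuple] at hd
    rw [mem_piAntidiag]
    refine ⟨?_, fun _ _ => mem_univ _⟩
    simp only [Pi.sub_apply, Pi.one_apply]
    rw [sum_tsub_one_of_pos univ fun i _ => hd.2 i, hd.1, card_univ, Fintype.card_fin,
      Nat.add_sub_cancel]
  · intro e he
    rw [mem_piAntidiag] at he
    rw [mem_filter, Nat.mem_antidiagonalTuple]
    refine ⟨?_, fun i => Nat.succ_pos _⟩
    simp only [Pi.add_apply, Pi.one_apply, sum_add_distrib, he.1, sum_const, card_univ,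
      Fintype.card_fin, smul_eq_mul, mul_one]
  · intro d hd
    rw [mem_filter] at hd
    exact funext fun i => Nat.sub_add_cancel (hd.2 i)
  · intro e _
    exact funext fun i => Nat.add_sub_cancel (e i) 1
  · intro d hd
    rw [mem_filter, Nat.mem_antidiagonalTuple] at hd
    exact factorial_div_prod_factorial_pred_eq_multinomial hd.2 hd.1

namespace SimpleGraph

def treesWithDegrees {V : Type*} (d : V → ℕ) : Set (SimpleGraph V) :=
  {G | G.IsTree ∧ ∀ v, Nat.card (G.neighborSet v) = d v}

theorem card_treesWithDegrees_comp_equiv {V W : Type*} (e : V ≃ W) (d : W → ℕ) :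
    Nat.card (treesWithDegrees (d ∘ e)) = Nat.card (treesWithDegrees d) := by
  refine Nat.card_congr (e.simpleGraph.subtypeEquiv fun G => ?_)
  have hdeg (w : W) :
      Nat.card ((G.comap e.symm).neighborSet w) = Nat.card (G.neighborSet (e.symm w)) :=
    Nat.card_congr (e.symm.subtypeEquiv fun v => by simp)
  simp only [treesWithDegrees, Set.mem_ofPred_eq, Equiv.simpleGraph_apply,
    (Iso.comap e.symm G).isTree_iff, hdeg, Function.comp_apply]
  exact and_congr_right' ⟨fun h w => by simpa using h (e.symm w), fun h v => by simpa using h (e v)⟩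

theorem treesWithDegrees_eq_empty {V : Type*} [Finite V] [Nontrivial V] {d : V → ℕ} {v : V}
    (hv : d v = 0) : treesWithDegrees d = ∅ := by
  refine Set.eq_empty_of_forall_notMem fun G ⟨hG, hdeg⟩ => ?_
  have := (G.neighborSet_nonempty.mpr (hG.connected.preconnected.not_isIsolated v)).ncard_pos
  rw [← Nat.card_coe_set_eq, hdeg, hv] at this
  exact this.false

theorem treesWithDegrees_fin_two : treesWithDegrees (fun _ : Fin 2 => 1) = {⊤} := by
  have hdeg_top (v : Fin 2) : Nat.card ((⊤ : SimpleGraph (Fin 2)).neighborSet v) = 1 := by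
    classical
    rw [Nat.card_eq_fintype_card, card_neighborSet_eq_degree, complete_graph_degree,
      Fintype.card_fin]
  refine Set.eq_singleton_iff_unique_mem.mpr
    ⟨⟨⟨connected_top, .of_card_le_two (by simp)⟩, hdeg_top⟩, fun G ⟨_, hdeg⟩ => ?_⟩
  obtain ⟨w, hw⟩ : (G.neighborSet 0).Nonempty :=
    Set.nonempty_of_ncard_ne_zero <| by rw [← Nat.card_coe_set_eq, hdeg]; simp
  have h01 : G.Adj 0 1 := by
    fin_cases w
    · exact absurd hw G.irrefl
    · exact hw
  ext a b
  fin_cases a <;> fin_cases b <;> simp [h01, h01.symm]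

section attachLeaf

variable {n : ℕ} {H : SimpleGraph (Fin n)} {G : SimpleGraph (Fin (n + 1))} {k : Fin n}

def attachLeaf (H : SimpleGraph (Fin n)) (k : Fin n) : SimpleGraph (Fin (n + 1)) :=
  H.map Fin.castSucc ⊔ edge k.castSucc (Fin.last n)

theorem attachLeaf_adj_last {x : Fin (n + 1)} :
    (attachLeaf H k).Adj (Fin.last n) x ↔ x = k.castSucc := by
  simp only [attachLeaf, sup_adj, map_adj', edge_adj]
  grind [Fin.castSucc_ne_last]

theorem attachLeaf_adj_castSucc {i j : Fin n} :
    (attachLeaf H k).Adj i.castSucc j.castSucc ↔ H.Adj i j := by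
  simp only [attachLeaf, sup_adj, map_adj', edge_adj]
  grind [Fin.castSucc_ne_last, Fin.castSucc_inj, Adj.ne]

theorem comap_castSucc_attachLeaf : (attachLeaf H k).comap Fin.castSucc = H := by
  ext i j
  exact attachLeaf_adj_castSucc

theorem attachLeaf_comap_castSucc (hleaf : ∀ x, G.Adj (Fin.last n) x ↔ x = k.castSucc) :
    attachLeaf (G.comap Fin.castSucc) k = G := by
  ext a b
  cases a using Fin.lastCases <;> cases b using Fin.lastCases
  · simp
  · rw [attachLeaf_adj_last, hleaf]
  · rw [(attachLeaf _ k).adj_comm, G.adj_comm, attachLeaf_adj_last, hleaf]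
  · exact attachLeaf_adj_castSucc

theorem Connected.comap_castSucc (hG : G.Connected)
    (hleaf : ∀ x, G.Adj (Fin.last n) x ↔ x = k.castSucc) : (G.comap Fin.castSucc).Connected := by
  classical
  have hdeg : G.degree (Fin.last n) = 1 :=
    degree_eq_one_iff_existsUnique_adj.mpr ⟨k.castSucc, (hleaf _).mpr rfl, fun x => (hleaf x).mp⟩
  have hinduce := hG.induce_compl_singleton_of_degree_eq_one hdeg
  let e : Fin n ≃ ↥({Fin.last n}ᶜ : Set (Fin (n + 1))) := finSuccAboveEquiv (Fin.last n)
  have hcomap : (G.induce {Fin.last n}ᶜ).comap e = G.comap Fin.castSucc := by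
    ext i j
    change G.Adj ((Fin.last n).succAbove i) ((Fin.last n).succAbove j) ↔ _
    simp
  rw [← hcomap]
  exact (Iso.comap e _).connected_iff.mpr hinduce

theorem connected_attachLeaf_iff : (attachLeaf H k).Connected ↔ H.Connected := by
  refine ⟨fun h => ?_, fun h => ?_⟩
  · rw [← comap_castSucc_attachLeaf (H := H) (k := k)]
    exact h.comap_castSucc fun _ => attachLeaf_adj_last
  · let castSuccHom : H →g attachLeaf H k := ⟨Fin.castSucc, attachLeaf_adj_castSucc.mpr⟩
    refine (connected_iff_exists_forall_reachable _).mpr ⟨k.castSucc, fun v => ?_⟩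
    cases v using Fin.lastCases with
    | last => exact (attachLeaf_adj_last.mpr rfl).reachable.symm
    | cast i => exact (h.preconnected k i).map castSuccHom

theorem card_edgeSet_attachLeaf :
    Nat.card (attachLeaf H k).edgeSet = Nat.card H.edgeSet + 1 := by
  have hmap : (H.map Fin.castSucc).edgeSet = Fin.castSuccEmb.sym2Map '' H.edgeSet :=
    edgeSet_map Fin.castSuccEmb H
  have hnew : s(k.castSucc, Fin.last n) ∉ (H.map Fin.castSucc).edgeSet := by
    simp [map_adj']
  rw [Nat.card_coe_set_eq, Nat.card_coe_set_eq, attachLeaf, edgeSet_sup,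
    edgeSet_edge_of_ne (Fin.castSucc_ne_last k), Set.union_singleton,
    Set.ncard_insert_of_notMem hnew, hmap,
    Set.ncard_image_of_injective _ Fin.castSuccEmb.sym2Map.injective]

theorem isTree_attachLeaf_iff : (attachLeaf H k).IsTree ↔ H.IsTree := by
  rw [isTree_iff_connected_and_card, isTree_iff_connected_and_card, connected_attachLeaf_iff,
    card_edgeSet_attachLeaf, Nat.card_fin, Nat.card_fin, Nat.add_right_cancel_iff]

theorem card_neighborSet_castSucc (hleaf : ∀ x, G.Adj (Fin.last n) x ↔ x = k.castSucc)
    (i : Fin n) : Nat.card (G.neighborSet i.castSucc) =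
      Nat.card ((G.comap Fin.castSucc).neighborSet i) + if i = k then 1 else 0 := by
  classical
  simp only [Nat.card_eq_fintype_card, Fintype.card_subtype, card_filter, Fin.sum_univ_castSucc,
    mem_neighborSet, comap_adj, G.adj_comm _ (Fin.last n), hleaf, Fin.castSucc_inj]

theorem card_neighborSet_last_attachLeaf :
    Nat.card ((attachLeaf H k).neighborSet (Fin.last n)) = 1 := by
  rw [Nat.card_coe_set_eq, Set.ncard_eq_one]
  exact ⟨k.castSucc, Set.ext fun _ => attachLeaf_adj_last⟩

theorem attachLeaf_mem_treesWithDegrees_iff {d : Fin (n + 1) → ℕ} (hk : 0 < d k.castSucc)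
    (hlast : d (Fin.last n) = 1) :
    attachLeaf H k ∈ treesWithDegrees d ↔
      H ∈ treesWithDegrees (Function.update (d ∘ Fin.castSucc) k (d k.castSucc - 1)) := by
  refine and_congr isTree_attachLeaf_iff ?_
  simp only [Fin.forall_fin_succ', card_neighborSet_last_attachLeaf, hlast, and_true,
    card_neighborSet_castSucc (fun _ => attachLeaf_adj_last), comap_castSucc_attachLeaf]
  refine forall_congr' fun i => ?_
  rcases eq_or_ne i k with rfl | hik
  · simp only [if_pos, Function.update_self]
    omega
  · simp [hik]

theorem card_treesWithDegrees_eq_sum {d : Fin (n + 1) → ℕ} (hpos : ∀ i, 0 < d i)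
    (hlast : d (Fin.last n) = 1) :
    Nat.card (treesWithDegrees d) =
      ∑ k, Nat.card
        (treesWithDegrees (Function.update (d ∘ Fin.castSucc) k (d k.castSucc - 1))) := by
  rw [← Nat.card_sigma]
  refine (Nat.card_eq_of_bijective (fun p => ⟨attachLeaf p.2 p.1,
    (attachLeaf_mem_treesWithDegrees_iff (hpos _) hlast).mpr p.2.2⟩) ⟨?_, ?_⟩).symm
  · rintro ⟨k, H, hH⟩ ⟨k', H', hH'⟩ h
    have hG : attachLeaf H k = attachLeaf H' k' := congrArg Subtype.val h
    obtain rfl : k = k' := Fin.castSucc_injective _ <|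
      attachLeaf_adj_last.mp (hG ▸ attachLeaf_adj_last.mpr rfl)
    obtain rfl : H = H' := by
      rw [← comap_castSucc_attachLeaf (H := H) (k := k), hG, comap_castSucc_attachLeaf]
    rfl
  · rintro ⟨G, hG, hdeg⟩
    obtain ⟨w, hw⟩ := Set.ncard_eq_one.mp <| (Nat.card_coe_set_eq _).symm.trans <|
      (hdeg (Fin.last n)).trans hlast
    have hleaf (x : Fin (n + 1)) : G.Adj (Fin.last n) x ↔ x = w := Set.ext_iff.mp hw x
    obtain ⟨k, rfl⟩ : ∃ k : Fin n, k.castSucc = w :=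
      Fin.exists_castSucc_eq.mpr fun h => G.irrefl (h ▸ (hleaf w).mpr rfl)
    have hG' := attachLeaf_comap_castSucc hleaf
    refine ⟨⟨k, G.comap Fin.castSucc, ?_⟩, Subtype.ext hG'⟩
    rw [← attachLeaf_mem_treesWithDegrees_iff (hpos _) hlast, hG']
    exact ⟨hG, hdeg⟩

end attachLeaf

theorem card_treesWithDegrees_of_last_eq_one {n : ℕ} (hn : 2 ≤ n)
    (ih : ∀ d : Fin n → ℕ, (∀ i, 0 < d i) → ∑ i, d i = 2 * n - 2 →
      Nat.card (treesWithDegrees d) = Nat.multinomial univ (d - 1))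
    {d : Fin (n + 1) → ℕ} (hpos : ∀ i, 0 < d i) (hsum : ∑ i, d i = 2 * (n + 1) - 2)
    (hlast : d (Fin.last n) = 1) :
    Nat.card (treesWithDegrees d) = Nat.multinomial univ (d - 1) := by
  have hsum' : ∑ i : Fin n, d i.castSucc = 2 * n - 1 := by
    rw [Fin.sum_univ_castSucc, hlast] at hsum
    omega
  have hsum_pred : ∑ i : Fin n, ((d - 1) ∘ Fin.castSucc) i ≠ 0 := by
    simp only [Function.comp_apply, Pi.sub_apply, Pi.one_apply]
    rw [sum_tsub_one_of_pos univ fun i _ => hpos _, hsum', card_univ, Fintype.card_fin]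
    omega
  rw [card_treesWithDegrees_eq_sum hpos hlast,
    Nat.multinomial_univ_of_last_eq_zero (by simp [hlast]),
    Nat.multinomial_eq_sum_multinomial_update_pred hsum_pred, sum_filter]
  refine sum_congr rfl fun k _ => ?_
  set d' := Function.update (d ∘ Fin.castSucc) k (d k.castSucc - 1)
  have hd' (i : Fin n) : d' i = if i = k then d k.castSucc - 1 else d i.castSucc := by
    simp only [d', Function.update_apply, Function.comp_apply]
  split_ifs with hk
  · have hsum_d' : ∑ i, d' i = 2 * n - 2 := by
      have := add_sum_erase univ (fun i => d i.castSucc) (mem_univ k)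
      simp only [d', sum_update_of_mem (mem_univ k), sdiff_singleton_eq_erase,
        Function.comp_apply, Pi.sub_apply, Pi.one_apply] at hk ⊢
      omega
    rw [ih d' (fun i => by rw [hd']; split_ifs <;> simp_all; omega) hsum_d']
    congr 1
    funext i
    simp only [hd', Pi.sub_apply, Pi.one_apply, Function.comp_apply, Function.update_apply]
    split_ifs <;> simp_all
  · have : Nontrivial (Fin n) := Fin.nontrivial_iff_two_le.mpr hn
    rw [treesWithDegrees_eq_empty (v := k) (by simp_all [d'])]
    simp

theorem card_treesWithDegrees {n : ℕ} (hn : 2 ≤ n) (d : Fin n → ℕ) (hpos : ∀ i, 0 < d i)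
    (hsum : ∑ i, d i = 2 * n - 2) :
    Nat.card (treesWithDegrees d) = Nat.multinomial univ (d - 1) := by
  induction n, hn using Nat.le_induction with
  | base =>
    obtain rfl : d = fun _ => 1 := by
      have := Fin.sum_univ_two d
      have := hpos 0
      have := hpos 1
      funext i
      fin_cases i <;> simp <;> omega
    simp [treesWithDegrees_fin_two, Nat.multinomial]
  | succ n hn ih =>
    obtain ⟨j, -, hj⟩ := exists_eq_one_of_sum_lt (s := univ) (fun i _ => hpos i) (by simp; omega)
    let σ := Equiv.swap j (Fin.last n)
    rw [← card_treesWithDegrees_comp_equiv σ, ← Nat.multinomial_univ_comp_equiv σ]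
    exact card_treesWithDegrees_of_last_eq_one hn ih (fun i => hpos _)
      (by rw [← hsum]; exact Equiv.sum_comp σ d) (by simp [σ, hj])

end SimpleGraph

/-- The number of labeled trees with a fixed degree sequence is the multinomial
coefficient `(n-2)!/∏ (d_i - 1)!`, and summing this over all positive degree sequences
with sum `2n - 2` recovers Cayley's formula `n^(n-2)`. -/
theorem degree_sequence_count_and_cayley (n : ℕ) (hn : 2 ≤ n) :
    (∀ d : Fin n → ℕ, (∀ i, 0 < d i) → ∑ i, d i = 2 * n - 2 →
        Nat.card {G : SimpleGraph (Fin n) //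
            G.IsTree ∧ ∀ i, Nat.card {w // G.Adj i w} = d i} =
          Nat.factorial (n - 2) / ∏ i, Nat.factorial (d i - 1)) ∧
    ∑ d ∈ (Finset.Nat.antidiagonalTuple n (2 * n - 2)).filter (fun d => ∀ i, 0 < d i),
        (Nat.factorial (n - 2) / ∏ i, Nat.factorial (d i - 1)) = n ^ (n - 2) := by
  refine ⟨fun d hpos hsum => ?_, ?_⟩
  · rw [factorial_div_prod_factorial_pred_eq_multinomial hpos (by omega)]
    exact card_treesWithDegrees hn d hpos hsum
  · rw [show 2 * n - 2 = n - 2 + n by omega]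
    exact sum_factorial_div_prod_factorial_pred n (n - 2)
end
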